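/- arXiv:2501.02331 — 4 statements merged into one kernel-verified Lean document; each statement's English description precedes it below -/
import Mathlib

section
/- Let F be a finite field of characteristic 2, and define σ : F → F by σ(x) = x⁻¹ for x ≠ 0 and σ(0) = 0. Then the graph {(x, σ(x)) : x ∈ F} ⊆ F² contains no three distinct collinear points. -/
/-! Since `0⁻¹ = 0`, the map `σ` is field inversion. Clearing denominators, the collinearity
determinant of `(a, a⁻¹), (b, b⁻¹), (c, c⁻¹)` is `(a - b)(b - c)(c - a) / (abc)` when none of the
abscissae vanishes, and `(b - c)(b + c) / (bc)` when `a = 0`. The first is nonzero in any field;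
the second is nonzero because `b + c = b - c` in characteristic 2. -/

def collinearityDet {R : Type*} [CommRing R] (p q r : R × R) : R :=
  p.1 * (q.2 - r.2) + q.1 * (r.2 - p.2) + r.1 * (p.2 - q.2)

lemma collinearityDet_rotate {R : Type*} [CommRing R] (p q r : R × R) :
    collinearityDet p q r = collinearityDet q r p := by
  unfold collinearityDet
  ring

section

variable {K : Type*} [Field K]

lemma collinearityDet_inv_of_ne_zero {a b c : K} (ha : a ≠ 0) (hb : b ≠ 0) (hc : c ≠ 0) :
    collinearityDet (a, a⁻¹) (b, b⁻¹) (c, c⁻¹) = (a - b) * (b - c) * (c - a) / (a * b * c) := by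
  unfold collinearityDet
  field_simp
  ring

lemma collinearityDet_zero_inv {b c : K} (hb : b ≠ 0) (hc : c ≠ 0) :
    collinearityDet (0, 0⁻¹) (b, b⁻¹) (c, c⁻¹) = (b - c) * (b + c) / (b * c) := by
  unfold collinearityDet
  field_simp
  ring

lemma collinearityDet_inv_ne_zero_of_ne_zero {a b c : K} (ha : a ≠ 0) (hb : b ≠ 0) (hc : c ≠ 0)
    (hab : a ≠ b) (hbc : b ≠ c) (hca : c ≠ a) :
    collinearityDet (a, a⁻¹) (b, b⁻¹) (c, c⁻¹) ≠ 0 := by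
  rw [collinearityDet_inv_of_ne_zero ha hb hc]
  exact div_ne_zero
    (mul_ne_zero (mul_ne_zero (sub_ne_zero.2 hab) (sub_ne_zero.2 hbc)) (sub_ne_zero.2 hca))
    (mul_ne_zero (mul_ne_zero ha hb) hc)

lemma collinearityDet_zero_inv_ne_zero [CharP K 2] {b c : K} (hb : b ≠ 0) (hc : c ≠ 0)
    (hbc : b ≠ c) : collinearityDet (0, 0⁻¹) (b, b⁻¹) (c, c⁻¹) ≠ 0 := by
  rw [collinearityDet_zero_inv hb hc]
  have hsum : b + c ≠ 0 := fun h => hbc (CharTwo.add_eq_zero.1 h)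
  exact div_ne_zero (mul_ne_zero (sub_ne_zero.2 hbc) hsum) (mul_ne_zero hb hc)

lemma collinearityDet_inv_ne_zero [CharP K 2] {a b c : K}
    (hab : a ≠ b) (hbc : b ≠ c) (hca : c ≠ a) :
    collinearityDet (a, a⁻¹) (b, b⁻¹) (c, c⁻¹) ≠ 0 := by
  rcases eq_or_ne a 0 with rfl | ha
  · exact collinearityDet_zero_inv_ne_zero hab.symm hca hbc
  rcases eq_or_ne b 0 with rfl | hb
  · rw [collinearityDet_rotate]
    exact collinearityDet_zero_inv_ne_zero hbc.symm ha hca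
  rcases eq_or_ne c 0 with rfl | hc
  · rw [← collinearityDet_rotate]
    exact collinearityDet_zero_inv_ne_zero ha hb hab
  exact collinearityDet_inv_ne_zero_of_ne_zero ha hb hc hab hbc hca

end

open Classical in

theorem inversion_no_collinear_triple_general {F : Type*} [Field F]
    (hchar : ringChar F = 2)
    (σ : F → F) (hσ : ∀ x : F, σ x = if x = 0 then 0 else x⁻¹) :
    ∀ x₁ x₂ x₃ : F, x₁ ≠ x₂ → x₁ ≠ x₃ → x₂ ≠ x₃ →
      x₁ * (σ x₂ - σ x₃) + x₂ * (σ x₃ - σ x₁) + x₃ * (σ x₁ - σ x₂) ≠ 0 := by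
  have : CharP F 2 := ringChar.eq_iff.1 hchar
  have hσ_inv : σ = (·⁻¹) := funext fun x => by
    rw [hσ]
    split_ifs with hx
    · rw [hx, inv_zero]
    · rfl
  intro x₁ x₂ x₃ h₁₂ h₁₃ h₂₃
  subst hσ_inv
  exact collinearityDet_inv_ne_zero h₁₂ h₂₃ h₁₃.symm

open Classical in
/-- Over a finite field of characteristic 2, the graph of the inversion permutation
(x ↦ x⁻¹, 0 ↦ 0) contains no three distinct collinear points. -/
theorem inversion_no_collinear_triple {F : Type*} [Field F] [Fintype F]
    (hchar : ringChar F = 2)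
    (σ : F → F) (hσ : ∀ x : F, σ x = if x = 0 then 0 else x⁻¹) :
    ∀ x₁ x₂ x₃ : F, x₁ ≠ x₂ → x₁ ≠ x₃ → x₂ ≠ x₃ →
      x₁ * (σ x₂ - σ x₃) + x₂ * (σ x₃ - σ x₁) + x₃ * (σ x₁ - σ x₂) ≠ 0 :=
  inversion_no_collinear_triple_general hchar σ hσ
end

section
/- Every permutation σ of a finite field F of odd order q ≥ 3 admits at least one collinear triple in its graph, i.e., there exist distinct x₁, x₂, x₃ ∈ F with x₁(σ(x₂) - σ(x₃)) + x₂(σ(x₃) - σ(x₁)) + x₃(σ(x₁) - σ(x₂)) = 0. -/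
/-- Every permutation of a finite field of odd order q ≥ 3 admits a collinear triple
in its graph. -/
theorem permutation_has_collinear_triple {F : Type*} [Field F] [Fintype F]
    (hodd : Odd (Fintype.card F)) (h3 : 3 ≤ Fintype.card F)
    (σ : F → F) (hσ : Function.Bijective σ) :
    ∃ x₁ x₂ x₃ : F, x₁ ≠ x₂ ∧ x₁ ≠ x₃ ∧ x₂ ≠ x₃ ∧
      x₁ * (σ x₂ - σ x₃) + x₂ * (σ x₃ - σ x₁) + x₃ * (σ x₁ - σ x₂) = 0 := by
  classical
  by_contra hcon
  push_neg at hcon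
  set q := Fintype.card F with hq
  -- for each nonzero slope m, each line σ x - m x = c contains at most 2 graph points
  have hfib : ∀ m : F, ∀ c : F,
      (Finset.univ.filter (fun x : F => σ x - m * x = c)).card ≤ 2 := by
    intro m c
    by_contra hlt
    push_neg at hlt
    rw [Finset.two_lt_card_iff] at hlt
    obtain ⟨x, y, z, hx, hy, hz, hxy, hxz, hyz⟩ := hlt
    simp only [Finset.mem_filter, Finset.mem_univ, true_and] at hx hy hz
    have hx' : σ x = c + m * x := (sub_eq_iff_eq_add).mp hx
    have hy' : σ y = c + m * y := (sub_eq_iff_eq_add).mp hy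
    have hz' : σ z = c + m * z := (sub_eq_iff_eq_add).mp hz
    refine hcon x y z hxy hxz hyz ?_
    rw [hx', hy', hz']; ring
  -- per-slope pair count is at most q - 1
  have hSm : ∀ m : F,
      (Finset.univ.filter (fun p : F × F =>
        p.1 ≠ p.2 ∧ σ p.1 - m * p.1 = σ p.2 - m * p.2)).card ≤ q - 1 := by
    intro m
    set S := Finset.univ.filter (fun p : F × F =>
        p.1 ≠ p.2 ∧ σ p.1 - m * p.1 = σ p.2 - m * p.2) with hS
    have hcard : S.card = ∑ c : F,
        ((Finset.univ.filter (fun x : F => σ x - m * x = c)).offDiag).card := by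
      rw [Finset.card_eq_sum_card_fiberwise
        (f := fun p : F × F => σ p.1 - m * p.1) (t := Finset.univ) (fun x _ => Finset.mem_univ _)]
      refine Finset.sum_congr rfl fun c _ => ?_
      congr 1
      ext p
      simp only [hS, Finset.mem_filter, Finset.mem_univ, true_and, Finset.mem_offDiag]
      constructor
      · rintro ⟨⟨hne, heq⟩, hc⟩
        exact ⟨hc, heq.symm.trans hc, hne⟩
      · rintro ⟨h1, h2, hne⟩
        exact ⟨⟨hne, h1.trans h2.symm⟩, h1⟩
    have hsum_fib : ∑ c : F,
        (Finset.univ.filter (fun x : F => σ x - m * x = c)).card = q := by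
      rw [← Finset.card_eq_sum_card_fiberwise
        (f := fun x : F => σ x - m * x) (t := Finset.univ) (fun x _ => Finset.mem_univ _)]
      simp [hq]
    have hle : S.card ≤ q := by
      rw [hcard, ← hsum_fib]
      refine Finset.sum_le_sum fun c _ => ?_
      rw [Finset.offDiag_card]
      have := hfib m c
      set n := (Finset.univ.filter (fun x : F => σ x - m * x = c)).card
      interval_cases n <;> norm_num
    have heven : Even S.card := by
      rw [hcard]
      refine Finset.even_sum _ fun c _ => ?_
      rw [Finset.offDiag_card]
      have := hfib m c
      set n := (Finset.univ.filter (fun x : F => σ x - m * x = c)).card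
      interval_cases n <;> decide
    have hne : S.card ≠ q := by
      intro h
      rw [h] at heven
      exact (Nat.not_even_iff_odd.mpr hodd) heven
    omega
  -- total count of off-diagonal pairs, split by slope
  have hTot : (Finset.univ.filter (fun p : F × F => p.1 ≠ p.2)).card
      = ∑ m ∈ Finset.univ.filter (fun m : F => m ≠ 0),
          (Finset.univ.filter (fun p : F × F =>
            p.1 ≠ p.2 ∧ σ p.1 - m * p.1 = σ p.2 - m * p.2)).card := by
    have hmap : ∀ p ∈ Finset.univ.filter (fun p : F × F => p.1 ≠ p.2),
        (σ p.1 - σ p.2) / (p.1 - p.2) ∈ Finset.univ.filter (fun m : F => m ≠ 0) := by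
      intro p hp
      simp only [Finset.mem_filter, Finset.mem_univ, true_and] at hp ⊢
      exact div_ne_zero (sub_ne_zero.mpr (fun h => hp (hσ.injective h)))
        (sub_ne_zero.mpr hp)
    rw [Finset.card_eq_sum_card_fiberwise hmap]
    refine Finset.sum_congr rfl fun m hm => ?_
    congr 1
    ext p
    simp only [Finset.mem_filter, Finset.mem_univ, true_and]
    constructor
    · rintro ⟨hne, hsl⟩
      refine ⟨hne, ?_⟩
      have h12 : p.1 - p.2 ≠ 0 := sub_ne_zero.mpr hne
      have : σ p.1 - σ p.2 = m * (p.1 - p.2) := by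
        field_simp at hsl; linear_combination hsl
      linear_combination this
    · rintro ⟨hne, heq⟩
      refine ⟨hne, ?_⟩
      have h12 : p.1 - p.2 ≠ 0 := sub_ne_zero.mpr hne
      rw [div_eq_iff h12]
      linear_combination heq
  -- the total is q² - q
  have hcardTot : (Finset.univ.filter (fun p : F × F => p.1 ≠ p.2)).card = q * q - q := by
    have : (Finset.univ.filter (fun p : F × F => p.1 ≠ p.2))
        = (Finset.univ : Finset F).offDiag := by
      ext p
      simp [Finset.mem_offDiag]
    rw [this, Finset.offDiag_card]
    simp [hq]
  have hcard0 : (Finset.univ.filter (fun m : F => m ≠ 0)).card = q - 1 := by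
    rw [Finset.filter_ne']
    rw [Finset.card_erase_of_mem (Finset.mem_univ _)]
    simp [hq]
  have hfinal : q * q - q ≤ (q - 1) * (q - 1) := by
    calc q * q - q = (Finset.univ.filter (fun p : F × F => p.1 ≠ p.2)).card := hcardTot.symm
    _ = _ := hTot
    _ ≤ ∑ m ∈ Finset.univ.filter (fun m : F => m ≠ 0), (q - 1) :=
        Finset.sum_le_sum fun m _ => hSm m
    _ = (q - 1) * (q - 1) := by rw [Finset.sum_const, hcard0, smul_eq_mul]
  obtain ⟨k, hk⟩ : ∃ k, q = k + 2 := ⟨q - 2, by omega⟩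
  rw [hk] at hfinal
  have e1 : (k + 2) * (k + 2) - (k + 2) = k * k + 3 * k + 2 := by
    have : (k + 2) * (k + 2) = (k * k + 3 * k + 2) + (k + 2) := by ring
    omega
  have e2 : (k + 2 - 1) * (k + 2 - 1) = k * k + 2 * k + 1 := by
    have : k + 2 - 1 = k + 1 := by omega
    rw [this]; ring
  rw [e1, e2] at hfinal
  linarith
end

section
/- Let q be an odd integer ≥ 3. If a family of (q-1) partitions of a q²-element point set into q classes of size q (parallel classes of 'slanted lines') has the property that every pair of points from a fixed q-element transversal set S lies in exactly one class of exactly one partition, then some class of some partition contains at least 3 points of S. -/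
/-- Abstract form of: every generalized permutation in an affine plane of odd order
admits a collinear triple. Given q−1 partitions of a q²-point set into q blocks of size
q such that every pair of points of a q-element transversal S lies in exactly one block,
some block contains at least 3 points of S. -/
theorem generalized_permutation_collinear_triple
    (q : ℕ) (hq : Odd q) (hq3 : 3 ≤ q)
    {P : Type*} [Fintype P] [DecidableEq P] (hP : Fintype.card P = q ^ 2)
    (B : Fin (q - 1) → Fin q → Finset P)
    (hsize : ∀ j i, (B j i).card = q)
    (hdisj : ∀ j, ∀ i i', i ≠ i' → Disjoint (B j i) (B j i'))
    (hcover : ∀ j, ∀ p : P, ∃ i, p ∈ B j i)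
    (S : Finset P) (hS : S.card = q)
    (hpairs : ∀ p p' : P, p ∈ S → p' ∈ S → p ≠ p' →
      ∃! ji : Fin (q - 1) × Fin q, p ∈ B ji.1 ji.2 ∧ p' ∈ B ji.1 ji.2) :
    ∃ j i, 3 ≤ (S ∩ B j i).card := by
  by_contra hcon
  push_neg at hcon
  have hle : ∀ j i, (S ∩ B j i).card ≤ 2 := fun j i => Nat.lt_succ_iff.mp (hcon j i)
  -- each point lies in exactly one block of each partition
  have huniq : ∀ (j : Fin (q - 1)) (p : P), ∃! i, p ∈ B j i := by
    intro j p
    obtain ⟨i, hi⟩ := hcover j p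
    refine ⟨i, hi, fun i' hi' => ?_⟩
    by_contra hne
    exact (Finset.disjoint_left.mp (hdisj j i' i hne)) hi' hi
  -- each partition splits S: the intersection cardinalities sum to q
  have hsum : ∀ j : Fin (q - 1), ∑ i : Fin q, (S ∩ B j i).card = q := by
    intro j
    have h1 : ∀ i : Fin q, (S ∩ B j i).card = ∑ p ∈ S, if p ∈ B j i then 1 else 0 := by
      intro i
      rw [← Finset.filter_mem_eq_inter, Finset.card_filter]
    calc ∑ i : Fin q, (S ∩ B j i).card
        = ∑ i : Fin q, ∑ p ∈ S, if p ∈ B j i then 1 else 0 := by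
          exact Finset.sum_congr rfl fun i _ => h1 i
      _ = ∑ p ∈ S, ∑ i : Fin q, if p ∈ B j i then 1 else 0 := Finset.sum_comm
      _ = ∑ p ∈ S, 1 := by
          refine Finset.sum_congr rfl fun p _ => ?_
          obtain ⟨i, hi, hu⟩ := huniq j p
          have hfil : Finset.univ.filter (fun i' => p ∈ B j i') = {i} := by
            ext i'
            simp only [Finset.mem_filter, Finset.mem_univ, true_and,
              Finset.mem_singleton]
            exact ⟨fun h => hu i' h, fun h => h ▸ hi⟩
          rw [← Finset.card_filter, hfil, Finset.card_singleton]
      _ = q := by rw [Finset.sum_const, smul_eq_mul, mul_one, hS]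
  -- the off-diagonal pairs of S are partitioned by the blocks
  have hoff : S.offDiag =
      Finset.univ.biUnion
        (fun ji : Fin (q - 1) × Fin q => (S ∩ B ji.1 ji.2).offDiag) := by
    ext pp
    obtain ⟨p, p'⟩ := pp
    simp only [Finset.mem_offDiag, Finset.mem_biUnion, Finset.mem_univ, true_and,
      Finset.mem_inter]
    constructor
    · rintro ⟨hp, hp', hne⟩
      obtain ⟨ji, ⟨h1, h2⟩, _⟩ := hpairs p p' hp hp' hne
      exact ⟨ji, ⟨hp, h1⟩, ⟨hp', h2⟩, hne⟩
    · rintro ⟨ji, ⟨hp, _⟩, ⟨hp', _⟩, hne⟩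
      exact ⟨hp, hp', hne⟩
  have hpd : ∀ ji ∈ (Finset.univ : Finset (Fin (q - 1) × Fin q)), ∀ ji' ∈ Finset.univ,
      ji ≠ ji' →
      Disjoint ((S ∩ B ji.1 ji.2).offDiag) ((S ∩ B ji'.1 ji'.2).offDiag) := by
    intro ji _ ji' _ hne
    rw [Finset.disjoint_left]
    rintro ⟨p, p'⟩ h h'
    simp only [Finset.mem_offDiag, Finset.mem_inter] at h h'
    obtain ⟨⟨hp, hb⟩, ⟨hp', hb'⟩, hne2⟩ := h
    obtain ⟨⟨_, hc⟩, ⟨_, hc'⟩, _⟩ := h'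
    obtain ⟨w, hw, hu⟩ := hpairs p p' hp hp' hne2
    exact hne ((hu ji ⟨hb, hb'⟩).trans (hu ji' ⟨hc, hc'⟩).symm)
  have hcard : S.offDiag.card =
      ∑ ji : Fin (q - 1) × Fin q, ((S ∩ B ji.1 ji.2).offDiag).card := by
    rw [hoff, Finset.card_biUnion hpd]
  rw [Finset.offDiag_card, hS] at hcard
  -- per-partition bound
  have hbound : ∀ j : Fin (q - 1),
      ∑ i : Fin q, ((S ∩ B j i).offDiag).card ≤ q - 1 := by
    intro j
    have hterm : ∀ i : Fin q, ((S ∩ B j i).offDiag).card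
        = 2 * (if (S ∩ B j i).card = 2 then 1 else 0) := by
      intro i
      have h2 : (S ∩ B j i).card ≤ 2 := hle j i
      rw [Finset.offDiag_card]
      generalize h : (S ∩ B j i).card = n at h2 ⊢
      interval_cases n <;> norm_num
    have hk : ∑ i : Fin q, ((S ∩ B j i).offDiag).card
        = 2 * ∑ i : Fin q, (if (S ∩ B j i).card = 2 then 1 else 0) := by
      rw [Finset.mul_sum]
      exact Finset.sum_congr rfl fun i _ => hterm i
    set k := ∑ i : Fin q, (if (S ∩ B j i).card = 2 then 1 else 0) with hkdef
    have hkq : 2 * k ≤ q := by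
      calc 2 * k = ∑ i : Fin q, 2 * (if (S ∩ B j i).card = 2 then 1 else 0) := by
            rw [hkdef, Finset.mul_sum]
        _ ≤ ∑ i : Fin q, (S ∩ B j i).card := by
            refine Finset.sum_le_sum fun i _ => ?_
            by_cases h : (S ∩ B j i).card = 2 <;> simp [h]
        _ = q := hsum j
    have hne : 2 * k ≠ q := by
      intro h
      exact (Nat.not_even_iff_odd.mpr hq) ⟨k, by omega⟩
    rw [hk]
    omega
  have htotal : q * q - q ≤ (q - 1) * (q - 1) := by
    calc q * q - q = ∑ ji : Fin (q - 1) × Fin q, ((S ∩ B ji.1 ji.2).offDiag).card :=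
          hcard
      _ = ∑ j : Fin (q - 1), ∑ i : Fin q, ((S ∩ B j i).offDiag).card := by
          rw [Fintype.sum_prod_type]
      _ ≤ ∑ _j : Fin (q - 1), (q - 1) := Finset.sum_le_sum fun j _ => hbound j
      _ = (q - 1) * (q - 1) := by
          rw [Finset.sum_const, Finset.card_univ, Fintype.card_fin, smul_eq_mul]
  obtain ⟨m, rfl⟩ : ∃ m, q = m + 1 := ⟨q - 1, by omega⟩
  have hm2 : 2 ≤ m := by omega
  have e1 : (m + 1) * (m + 1) - (m + 1) = m * m + m := by
    have : (m + 1) * (m + 1) = (m * m + m) + (m + 1) := by ring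
    rw [this, Nat.add_sub_cancel]
  have e2 : m + 1 - 1 = m := by omega
  rw [e1, e2] at htotal
  linarith
end

section
/- Let F be a finite field of characteristic 2 and x, y ∈ F \ {0} with x ≠ y. Then (x⁻¹ − y⁻¹)/(x − y) ≠ x⁻¹/x = x⁻², and also for distinct nonzero x, y, z, (x⁻¹ − y⁻¹)/(x − y) = (x⁻¹ − z⁻¹)/(x − z) implies y = z. -/
/-! The secant slope of `t ↦ t⁻¹` between distinct nonzero points `x` and `y` is `-(x * y)⁻¹`.
Comparing it with `x⁻¹ / x = (x * x)⁻¹` forces `-y = x`, which in characteristic 2 means `y = x`;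
two secant slopes from the same point `x` agree only when `x * y = x * z`. -/

section SecantSlope

variable {K : Type*} [Field K] {x y z : K}

theorem inv_sub_inv_div_sub (hx : x ≠ 0) (hy : y ≠ 0) (hxy : x ≠ y) :
    (x⁻¹ - y⁻¹) / (x - y) = -(x * y)⁻¹ := by
  have hsub : x - y ≠ 0 := sub_ne_zero.mpr hxy
  rw [inv_sub_inv hx hy, div_div, ← neg_sub x y, neg_div, div_mul_cancel_right₀ hsub]

theorem inv_sub_inv_div_sub_ne_inv_div_self [CharP K 2] (hx : x ≠ 0) (hy : y ≠ 0) (hxy : x ≠ y) :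
    (x⁻¹ - y⁻¹) / (x - y) ≠ x⁻¹ / x := by
  rw [inv_sub_inv_div_sub hx hy hxy, CharTwo.neg_eq, inv_div_left, ne_eq, inv_inj,
    mul_right_inj' hx]
  exact hxy.symm

theorem inv_sub_inv_div_sub_left_injective (hx : x ≠ 0) (hy : y ≠ 0) (hz : z ≠ 0) (hxy : x ≠ y)
    (hxz : x ≠ z) (h : (x⁻¹ - y⁻¹) / (x - y) = (x⁻¹ - z⁻¹) / (x - z)) : y = z := by
  rw [inv_sub_inv_div_sub hx hy hxy, inv_sub_inv_div_sub hx hz hxz, neg_inj, inv_inj] at h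
  exact mul_left_cancel₀ hx h

end SecantSlope

theorem inversion_slopes_general {F : Type*} [Field F] (hchar : ringChar F = 2) :
    (∀ x y : F, x ≠ 0 → y ≠ 0 → x ≠ y →
        (x⁻¹ - y⁻¹) / (x - y) ≠ x⁻¹ / x ∧ x⁻¹ / x = x⁻¹ * x⁻¹) ∧
      (∀ x y z : F, x ≠ 0 → y ≠ 0 → z ≠ 0 → x ≠ y → x ≠ z →
        (x⁻¹ - y⁻¹) / (x - y) = (x⁻¹ - z⁻¹) / (x - z) → y = z) := by
  have : CharP F 2 := ringChar.of_eq hchar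
  exact ⟨fun x y hx hy hxy => ⟨inv_sub_inv_div_sub_ne_inv_div_self hx hy hxy, div_eq_mul_inv _ _⟩,
    fun x y z hx hy hz hxy hxz => inv_sub_inv_div_sub_left_injective hx hy hz hxy hxz⟩

/-- Slope computations in characteristic 2 for the inversion map: for distinct nonzero
x, y the secant slope (x⁻¹ − y⁻¹)/(x − y) differs from x⁻¹/x = x⁻², and equal secant
slopes from x force equal second points. -/
theorem inversion_slopes {F : Type*} [Field F] [Fintype F] (hchar : ringChar F = 2) :
    (∀ x y : F, x ≠ 0 → y ≠ 0 → x ≠ y →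
        (x⁻¹ - y⁻¹) / (x - y) ≠ x⁻¹ / x ∧ x⁻¹ / x = x⁻¹ * x⁻¹) ∧
      (∀ x y z : F, x ≠ 0 → y ≠ 0 → z ≠ 0 → x ≠ y → x ≠ z →
        (x⁻¹ - y⁻¹) / (x - y) = (x⁻¹ - z⁻¹) / (x - z) → y = z) :=
  inversion_slopes_general hchar
end
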